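/- Let F = {f_j}_{j∈J} and G = {g_j}_{j∈J} be Bessel sequences in a separable Hilbert space H with Bessel bounds B₁ and B₂ respectively, such that f = Σ_{j∈J} ⟨f, f_j⟩ g_j = Σ_{j∈J} ⟨f, g_j⟩ f_j for all f ∈ H, and such that for every σ ⊂ J and every f ∈ H, Σ_{j∈σ} ⟨f, f_j⟩ g_j = Σ_{j∈σ} ⟨f, g_j⟩ f_j. Then F and G are woven frames for H: for every σ ⊂ J and all f ∈ H, (1/(2 max{B₁, B₂}))‖f‖² ≤ Σ_{j∈σ} |⟨f, f_j⟩|² + Σ_{j∈σ^c} |⟨f, g_j⟩|² ≤ (B₁ + B₂)‖f‖². -/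

import Mathlib

/-!
Splitting the reconstruction formula `x = ∑ j, ⟪g j, x⟫ • f j` along `σ` and using the partial
identity on `σ` gives `x = ∑_{j ∈ σ} ⟪f j, x⟫ • g j + ∑_{j ∈ σᶜ} ⟪g j, x⟫ • f j`. The synthesis
operator of a Bessel sequence with bound `B` is the adjoint of its analysis operator `H → ℓ²`,
so it has norm at most `√B`; hence the two pieces have squared norms at most
`B₂ ∑_{σ} |⟪x, f j⟫|²` and `B₁ ∑_{σᶜ} |⟪x, g j⟫|²`, and `‖u + v‖² ≤ 2 (‖u‖² + ‖v‖²)` gives the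
lower frame bound. The upper bound is the sum of the two Bessel bounds.
-/

local notation "⟪" x ", " y "⟫" => @inner ℂ _ _ x y

open scoped lp InnerProduct

section lp

variable {ι : Type*} {E : ι → Type*} [∀ i, NormedAddCommGroup (E i)]

theorem memℓp_two_iff {c : ∀ i, E i} : Memℓp c 2 ↔ Summable fun i => ‖c i‖ ^ 2 := by
  rw [memℓp_gen_iff (by norm_num)]
  norm_num

theorem lp.norm_sq_eq_tsum (c : lp E 2) : ‖c‖ ^ 2 = ∑' i, ‖c i‖ ^ 2 := by
  simpa using lp.norm_rpow_eq_tsum (p := 2) (by norm_num) c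

end lp

variable {𝕜 : Type*} [RCLike 𝕜] {H : Type*} [NormedAddCommGroup H] [InnerProductSpace 𝕜 H]
  {ι : Type*}

variable (𝕜) in
/-- Summability is part of the definition: `∑'` of a non-summable family is `0`. -/
def IsBessel (φ : ι → H) (B : ℝ) : Prop :=
  ∀ x : H, Summable (fun i => ‖inner 𝕜 x (φ i)‖ ^ 2) ∧ ∑' i, ‖inner 𝕜 x (φ i)‖ ^ 2 ≤ B * ‖x‖ ^ 2

namespace IsBessel

variable {φ : ι → H} {B : ℝ}

theorem restrict (h : IsBessel 𝕜 φ B) (s : Set ι) : IsBessel 𝕜 (fun i : s => φ i) B := fun x =>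
  ⟨(h x).1.subtype s, ((h x).1.tsum_subtype_le _ s fun _ => by positivity).trans (h x).2⟩

theorem summable_norm_inner_sq_left (h : IsBessel 𝕜 φ B) (x : H) :
    Summable fun i => ‖inner 𝕜 (φ i) x‖ ^ 2 := by
  simpa only [norm_inner_symm] using (h x).1

noncomputable def analysisOp (h : IsBessel 𝕜 φ B) : H →L[𝕜] ℓ²(ι, 𝕜) :=
  LinearMap.mkContinuous
    { toFun := fun x =>
        ⟨fun i => inner 𝕜 (φ i) x, memℓp_two_iff.2 (h.summable_norm_inner_sq_left x)⟩
      map_add' := fun x y => Subtype.ext <| funext fun i => inner_add_right _ _ _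
      map_smul' := fun a x => Subtype.ext <| funext fun i => inner_smul_right _ _ _ }
    √B fun x => by
      calc _ = √(‖_‖ ^ 2) := (Real.sqrt_sq (norm_nonneg _)).symm
        _ ≤ √(B * ‖x‖ ^ 2) := Real.sqrt_le_sqrt <| by
          simpa only [LinearMap.coe_mk, AddHom.coe_mk, lp.norm_sq_eq_tsum, norm_inner_symm]
            using (h x).2
        _ = √B * ‖x‖ := by rw [Real.sqrt_mul' _ (sq_nonneg _), Real.sqrt_sq (norm_nonneg _)]

@[simp]
theorem analysisOp_apply (h : IsBessel 𝕜 φ B) (x : H) (i : ι) :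
    h.analysisOp x i = inner 𝕜 (φ i) x :=
  rfl

theorem norm_analysisOp_le (h : IsBessel 𝕜 φ B) : ‖h.analysisOp‖ ≤ √B :=
  LinearMap.mkContinuous_norm_le _ (Real.sqrt_nonneg B) _

variable [CompleteSpace H]

theorem adjoint_analysisOp_single [DecidableEq ι] (h : IsBessel 𝕜 φ B) (i : ι) (a : 𝕜) :
    (h.analysisOp†) (lp.single 2 i a) = a • φ i := by
  refine ext_inner_right 𝕜 fun x => ?_
  rw [ContinuousLinearMap.adjoint_inner_left, lp.inner_single_left, inner_smul_left,
    analysisOp_apply, RCLike.inner_apply']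

theorem hasSum_smul_adjoint_analysisOp (h : IsBessel 𝕜 φ B) (c : ℓ²(ι, 𝕜)) :
    HasSum (fun i => c i • φ i) ((h.analysisOp†) c) := by
  classical
  simpa only [adjoint_analysisOp_single] using
    (lp.hasSum_single (by norm_num) c).mapL (h.analysisOp†)

theorem summable_smul (h : IsBessel 𝕜 φ B) {c : ι → 𝕜} (hc : Summable fun i => ‖c i‖ ^ 2) :
    Summable fun i => c i • φ i :=
  (h.hasSum_smul_adjoint_analysisOp ⟨c, memℓp_two_iff.2 hc⟩).summable

theorem norm_tsum_smul_sq_le (h : IsBessel 𝕜 φ B) (hB : 0 ≤ B) {c : ι → 𝕜}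
    (hc : Summable fun i => ‖c i‖ ^ 2) :
    ‖∑' i, c i • φ i‖ ^ 2 ≤ B * ∑' i, ‖c i‖ ^ 2 := by
  set c' : ℓ²(ι, 𝕜) := ⟨c, memℓp_two_iff.2 hc⟩
  rw [(h.hasSum_smul_adjoint_analysisOp c').tsum_eq]
  calc ‖(h.analysisOp†) c'‖ ^ 2 ≤ (‖h.analysisOp†‖ * ‖c'‖) ^ 2 := by
        gcongr; exact ContinuousLinearMap.le_opNorm _ _
    _ ≤ (√B * ‖c'‖) ^ 2 := by
        gcongr; rw [LinearIsometryEquiv.norm_map]; exact h.norm_analysisOp_le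
    _ = B * ∑' i, ‖c i‖ ^ 2 := by rw [mul_pow, Real.sq_sqrt hB, lp.norm_sq_eq_tsum]

theorem norm_sq_le_of_mixed_reconstruction {f g : ι → H} {B₁ B₂ : ℝ} (hf : IsBessel 𝕜 f B₁)
    (hg : IsBessel 𝕜 g B₂) (hB₁ : 0 ≤ B₁) (hB₂ : 0 ≤ B₂) (σ : Set ι) (x : H)
    (hx : x = (∑' j : σ, inner 𝕜 (f j) x • g j) + ∑' j : ↥σᶜ, inner 𝕜 (g j) x • f j) :
    ‖x‖ ^ 2 ≤ 2 * max B₁ B₂ *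
      ((∑' j : σ, ‖inner 𝕜 x (f j)‖ ^ 2) + ∑' j : ↥σᶜ, ‖inner 𝕜 x (g j)‖ ^ 2) := by
  set u := ∑' j : σ, inner 𝕜 (f j) x • g j
  set v := ∑' j : ↥σᶜ, inner 𝕜 (g j) x • f j
  have hu : ‖u‖ ^ 2 ≤ B₂ * ∑' j : σ, ‖inner 𝕜 x (f j)‖ ^ 2 := by
    simpa only [norm_inner_symm] using (hg.restrict σ).norm_tsum_smul_sq_le hB₂
      ((hf.restrict σ).summable_norm_inner_sq_left x)
  have hv : ‖v‖ ^ 2 ≤ B₁ * ∑' j : ↥σᶜ, ‖inner 𝕜 x (g j)‖ ^ 2 := by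
    simpa only [norm_inner_symm] using (hf.restrict σᶜ).norm_tsum_smul_sq_le hB₁
      ((hg.restrict σᶜ).summable_norm_inner_sq_left x)
  calc ‖x‖ ^ 2 ≤ 2 * (‖u‖ ^ 2 + ‖v‖ ^ 2) := by
        rw [hx]
        exact (pow_le_pow_left₀ (norm_nonneg _) (norm_add_le u v) 2).trans add_sq_le
    _ ≤ 2 * (max B₁ B₂ * ∑' j : σ, ‖inner 𝕜 x (f j)‖ ^ 2 +
          max B₁ B₂ * ∑' j : ↥σᶜ, ‖inner 𝕜 x (g j)‖ ^ 2) := by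
        gcongr
        · exact hu.trans (by gcongr; exact le_max_right _ _)
        · exact hv.trans (by gcongr; exact le_max_left _ _)
    _ = _ := by ring

end IsBessel

theorem dual_bessel_woven_general
    {H : Type} [NormedAddCommGroup H] [InnerProductSpace ℂ H] [CompleteSpace H]
    {J : Type}
    (f g : J → H) (B₁ B₂ : ℝ) (hB₁ : 0 < B₁) (hB₂ : 0 < B₂)
    (hfSummable : ∀ x : H, Summable fun j : J => ‖⟪x, f j⟫‖ ^ 2)
    (hgSummable : ∀ x : H, Summable fun j : J => ‖⟪x, g j⟫‖ ^ 2)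
    (hfBessel : ∀ x : H, ∑' j : J, ‖⟪x, f j⟫‖ ^ 2 ≤ B₁ * ‖x‖ ^ 2)
    (hgBessel : ∀ x : H, ∑' j : J, ‖⟪x, g j⟫‖ ^ 2 ≤ B₂ * ‖x‖ ^ 2)
    (hdual₂ : ∀ x : H, (∑' j : J, ⟪g j, x⟫ • f j) = x)
    (hpartial : ∀ σ : Set J, ∀ x : H,
      (∑' j : σ, ⟪f (j : J), x⟫ • g (j : J)) = ∑' j : σ, ⟪g (j : J), x⟫ • f (j : J)) :
    ∀ σ : Set J, ∀ x : H,
      (1 / (2 * max B₁ B₂)) * ‖x‖ ^ 2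
        ≤ (∑' j : σ, ‖⟪x, f (j : J)⟫‖ ^ 2) + (∑' j : ↥σᶜ, ‖⟪x, g (j : J)⟫‖ ^ 2) ∧
      (∑' j : σ, ‖⟪x, f (j : J)⟫‖ ^ 2) + (∑' j : ↥σᶜ, ‖⟪x, g (j : J)⟫‖ ^ 2)
        ≤ (B₁ + B₂) * ‖x‖ ^ 2 := by
  intro σ x
  have hf : IsBessel ℂ f B₁ := fun x => ⟨hfSummable x, hfBessel x⟩
  have hg : IsBessel ℂ g B₂ := fun x => ⟨hgSummable x, hgBessel x⟩
  have hx : x = (∑' j : σ, ⟪f j, x⟫ • g j) + ∑' j : ↥σᶜ, ⟪g j, x⟫ • f j := by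
    have hsum := hf.summable_smul (hg.summable_norm_inner_sq_left x)
    rw [hpartial, hsum.tsum_subtype_add_tsum_subtype_compl, hdual₂]
  constructor
  · rw [one_div_mul_eq_div, div_le_iff₀ (by positivity), mul_comm]
    exact hf.norm_sq_le_of_mixed_reconstruction hg hB₁.le hB₂.le σ x hx
  · linarith [(hf.restrict σ x).2, (hg.restrict σᶜ x).2]

theorem dual_bessel_woven
    {H : Type} [NormedAddCommGroup H] [InnerProductSpace ℂ H] [CompleteSpace H]
    [TopologicalSpace.SeparableSpace H]
    {J : Type} [Countable J]
    (f g : J → H) (B₁ B₂ : ℝ) (hB₁ : 0 < B₁) (hB₂ : 0 < B₂)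
    (hfSummable : ∀ x : H, Summable fun j : J => ‖⟪x, f j⟫‖ ^ 2)
    (hgSummable : ∀ x : H, Summable fun j : J => ‖⟪x, g j⟫‖ ^ 2)
    (hfBessel : ∀ x : H, ∑' j : J, ‖⟪x, f j⟫‖ ^ 2 ≤ B₁ * ‖x‖ ^ 2)
    (hgBessel : ∀ x : H, ∑' j : J, ‖⟪x, g j⟫‖ ^ 2 ≤ B₂ * ‖x‖ ^ 2)
    (hdual₁ : ∀ x : H, (∑' j : J, ⟪f j, x⟫ • g j) = x)
    (hdual₂ : ∀ x : H, (∑' j : J, ⟪g j, x⟫ • f j) = x)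
    (hpartial : ∀ σ : Set J, ∀ x : H,
      (∑' j : σ, ⟪f (j : J), x⟫ • g (j : J)) = ∑' j : σ, ⟪g (j : J), x⟫ • f (j : J)) :
    ∀ σ : Set J, ∀ x : H,
      (1 / (2 * max B₁ B₂)) * ‖x‖ ^ 2
        ≤ (∑' j : σ, ‖⟪x, f (j : J)⟫‖ ^ 2) + (∑' j : ↥σᶜ, ‖⟪x, g (j : J)⟫‖ ^ 2) ∧
      (∑' j : σ, ‖⟪x, f (j : J)⟫‖ ^ 2) + (∑' j : ↥σᶜ, ‖⟪x, g (j : J)⟫‖ ^ 2)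
        ≤ (B₁ + B₂) * ‖x‖ ^ 2 :=
  dual_bessel_woven_general f g B₁ B₂ hB₁ hB₂ hfSummable hgSummable hfBessel hgBessel hdual₂
    hpartial
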